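/- Let f₁,…,f_n be monotone linear functions and let τ be a counterclockwise permutation of [n]. Then the cyclic sequence of composites of the shifts of τ, namely (f^{τ_0}, f^{τ_1}, …, f^{τ_{n−1}}), is cyclically unimodal with respect to intercepts: there exist k,ℓ ∈ {0,…,n−1} such that, reading indices modulo n, β(f^{τ_k}) ≤ β(f^{τ_{k+1}}) ≤ ⋯ ≤ β(f^{τ_ℓ}) ≥ β(f^{τ_{ℓ+1}}) ≥ ⋯ ≥ β(f^{τ_{k−1}}) ≥ β(f^{τ_k}). -/

import Mathlib

/-- A linear function `x ↦ a*x + b`. -/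
structure LinFun where
  a : ℝ
  b : ℝ

namespace LinFun

/-- Evaluation of a linear function. -/
def eval (f : LinFun) (x : ℝ) : ℝ := f.a * x + f.b

/-- Composition: `h.comp g` is the linear function `x ↦ h (g x)`. -/
def comp (h g : LinFun) : LinFun := ⟨h.a * g.a, h.a * g.b + h.b⟩

/-- The identical linear function `x ↦ x`. -/
def idf : LinFun := ⟨1, 0⟩

/-- `f` is the identical function (equivalently, its vector `(β f, 1 - α f)` is `(0,0)`,
i.e. its angle is `⊥`). -/
def IsId (f : LinFun) : Prop := f = idf

/-- The Euclidean norm of the vector `(β f, 1 - α f)` associated to `f`. -/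
noncomputable def vecNorm (f : LinFun) : ℝ := Real.sqrt (f.b ^ 2 + (1 - f.a) ^ 2)

/-- The polar angle in `[0, 2π)` of the vector `(β f, 1 - α f)` associated to `f`
(meaningful only when `f` is not identical). -/
noncomputable def theta (f : LinFun) : ℝ :=
  if 0 ≤ Complex.arg ⟨f.b, 1 - f.a⟩ then Complex.arg ⟨f.b, 1 - f.a⟩
  else Complex.arg ⟨f.b, 1 - f.a⟩ + 2 * Real.pi

end LinFun

/-- Congruence of angles modulo `2π`: `x ≡_{2π} y`. -/
def Cong (x y : ℝ) : Prop := ∃ k : ℤ, x - y = 2 * Real.pi * k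

/-- The set `[t1, t2]_{2π}`. -/
def Icc2pi (t1 t2 : ℝ) : Set ℝ :=
  {θ | ∃ l1 l2 : ℝ, Cong l1 t1 ∧ Cong l2 t2 ∧ 0 ≤ l2 - l1 ∧ l2 - l1 < 2 * Real.pi ∧
    θ ∈ Set.Icc l1 l2}

/-- The set `(t1, t2)_{2π}`. -/
def Ioo2pi (t1 t2 : ℝ) : Set ℝ :=
  {θ | ∃ l1 l2 : ℝ, Cong l1 t1 ∧ Cong l2 t2 ∧ 0 ≤ l2 - l1 ∧ l2 - l1 < 2 * Real.pi ∧
    θ ∈ Set.Ioo l1 l2}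

/-- Composite of a list of linear functions: `compList [g₁, …, g_m] = g_m ∘ ⋯ ∘ g₁`. -/
def compList (L : List LinFun) : LinFun := L.foldl (fun acc g => g.comp acc) LinFun.idf

/-- The list `f_{σ(1)}, …, f_{σ(n)}` (0-indexed positions). -/
def permList {n : ℕ} (f : Fin n → LinFun) (σ : Equiv.Perm (Fin n)) : List LinFun :=
  List.ofFn fun i => f (σ i)

/-- `f^σ = f_{σ(n)} ∘ ⋯ ∘ f_{σ(1)}`. -/
def permComp {n : ℕ} (f : Fin n → LinFun) (σ : Equiv.Perm (Fin n)) : LinFun :=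
  compList (permList f σ)

/-- The composite of the functions at the (0-indexed) positions `a, a+1, …, b` of `σ`:
`f_{σ(b)} ∘ ⋯ ∘ f_{σ(a)}` (in 0-indexed notation). -/
def segComp {n : ℕ} (f : Fin n → LinFun) (σ : Equiv.Perm (Fin n)) (a b : ℕ) : LinFun :=
  compList (((permList f σ).drop a).take (b + 1 - a))

/-- The composite corresponding to the `k`-shift `σ_k` of `σ`:
`f^{σ_k} = f_{σ(k)} ∘ ⋯ ∘ f_{σ(1)} ∘ f_{σ(n)} ∘ ⋯ ∘ f_{σ(k+1)}` (1-indexed notation). -/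
def shiftComp {n : ℕ} (f : Fin n → LinFun) (σ : Equiv.Perm (Fin n)) (k : ℕ) : LinFun :=
  compList ((permList f σ).rotate k)

/-- `σ` is a minimum (optimal) permutation for `f₁, …, f_n`. -/
def IsMinimum {n : ℕ} (f : Fin n → LinFun) (σ : Equiv.Perm (Fin n)) : Prop :=
  ∀ ρ : Equiv.Perm (Fin n), (permComp f σ).b ≤ (permComp f ρ).b

/-- `μ` belongs to the neighbourhood `N(σ)`: it is obtained from `σ` by swapping two
adjacent blocks of positions, `(l, …, m)` and `(m+1, …, r)` (0-indexed, `l ≤ m < r < n`). -/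
def InNbhd {n : ℕ} (σ μ : Equiv.Perm (Fin n)) : Prop :=
  ∃ (l m r : ℕ) (_ : l ≤ m) (_ : m < r) (_ : r < n),
    (∀ i : Fin n, (i.val < l ∨ r < i.val) → μ i = σ i) ∧
    (∀ i : Fin n, ∀ _ : l ≤ i.val, ∀ _ : i.val < l + r - m,
      μ i = σ ⟨i.val + m + 1 - l, by omega⟩) ∧
    (∀ i : Fin n, ∀ _ : l + r - m ≤ i.val, ∀ _ : i.val ≤ r,
      μ i = σ ⟨i.val + m - r, by omega⟩)

/-- `σ` is locally optimal for `f₁, …, f_n`. -/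
def LocallyOptimal {n : ℕ} (f : Fin n → LinFun) (σ : Equiv.Perm (Fin n)) : Prop :=
  ∀ μ : Equiv.Perm (Fin n), InNbhd σ μ → (permComp f σ).b ≤ (permComp f μ).b

/-- `σ` is counterclockwise: ignoring the identical functions, some rotation of the sequence
of angles `θ(f_{σ(1)}), …, θ(f_{σ(n)})` is nondecreasing. -/
def Counterclockwise {n : ℕ} (f : Fin n → LinFun) (σ : Equiv.Perm (Fin n)) : Prop :=
  ∃ c : ℕ, ∀ i j : Fin n, ¬ (f (σ i)).IsId → ¬ (f (σ j)).IsId →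
    ((c ≤ i.val ∧ i ≤ j) ∨ (i ≤ j ∧ j.val < c) ∨ (c ≤ i.val ∧ j.val < c)) →
    (f (σ i)).theta ≤ (f (σ j)).theta

/-- `f₁, …, f_n` are colinear: all vectors lie on one line through the origin. -/
def Colinear {n : ℕ} (f : Fin n → LinFun) : Prop :=
  ∃ lam : ℝ, ∀ i : Fin n,
    (f i).IsId ∨ Cong ((f i).theta) lam ∨ Cong ((f i).theta) (lam + Real.pi)

/-- `f₁, …, f_n` are potentially identical: some counterclockwise permutation composes
to the identical function. -/
def PotentiallyIdentical {n : ℕ} (f : Fin n → LinFun) : Prop :=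
  ∃ σ : Equiv.Perm (Fin n), Counterclockwise f σ ∧ (permComp f σ).IsId

/-- The ε-perturbation `f^{(ε)}` of a linear function. -/
noncomputable def epsPert (f : LinFun) (ε : ℝ) : LinFun := if f.a = 0 then ⟨ε, f.b⟩ else f

/-!
Let `s k` be the intercept of the `k`-th shift and `t = 1 - α` one minus the common slope.
Moving the first function `g` of a shift to its end gives `s (k + 1) = α(g) s k + t β(g)`, so
`s (k + 1) - s k` is the cross product of `vec g` with `(s k, t)`: the intercept rises exactly
when `(s k, t)` lies strictly within angle `π` counterclockwise of `vec g`. For `t ≥ 0` the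
direction of `(s, t)` turns clockwise as `s` grows, so along a window of shifts in which the
angles of the `vec g` increase, a descent, an ascent and a further descent cannot occur in this
order; a cyclic sequence without that pattern is unimodal. For `t < 0` the same applies to `-s`.
-/

open Real

namespace LinFun

lemma comp_assoc (f g h : LinFun) : (f.comp g).comp h = f.comp (g.comp h) := by
  simp only [comp, mk.injEq]
  constructor <;> ring

@[simp] lemma comp_idf (f : LinFun) : f.comp idf = f := by
  simp [comp, idf]

@[simp] lemma idf_comp (f : LinFun) : idf.comp f = f := by
  simp [comp, idf]

lemma comp_a_comm (g h : LinFun) : (g.comp h).a = (h.comp g).a :=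
  mul_comm _ _

lemma comp_b_eq (g h : LinFun) :
    (g.comp h).b = g.a * (h.comp g).b + (1 - (h.comp g).a) * g.b := by
  simp only [comp]
  ring

lemma vecNorm_eq_norm (f : LinFun) : f.vecNorm = ‖(⟨f.b, 1 - f.a⟩ : ℂ)‖ := by
  simp [vecNorm, Complex.norm_def, Complex.normSq_mk, sq]

lemma vecNorm_nonneg (f : LinFun) : 0 ≤ f.vecNorm :=
  Real.sqrt_nonneg _

lemma theta_nonneg (f : LinFun) : 0 ≤ f.theta := by
  unfold theta
  split_ifs with h
  · exact h
  · linarith [Complex.neg_pi_lt_arg (⟨f.b, 1 - f.a⟩ : ℂ)]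

lemma theta_lt_two_pi (f : LinFun) : f.theta < 2 * π := by
  unfold theta
  split_ifs with h
  · linarith [Complex.arg_le_pi (⟨f.b, 1 - f.a⟩ : ℂ), pi_pos]
  · linarith

lemma vecNorm_mul_cos_theta (f : LinFun) : f.vecNorm * cos f.theta = f.b := by
  have hcos : cos f.theta = cos (Complex.arg ⟨f.b, 1 - f.a⟩) := by
    unfold theta
    split_ifs
    exacts [rfl, cos_add_two_pi _]
  rw [hcos, vecNorm_eq_norm, Complex.norm_mul_cos_arg]

lemma vecNorm_mul_sin_theta (f : LinFun) : f.vecNorm * sin f.theta = 1 - f.a := by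
  have hsin : sin f.theta = sin (Complex.arg ⟨f.b, 1 - f.a⟩) := by
    unfold theta
    split_ifs
    exacts [rfl, sin_add_two_pi _]
  rw [hsin, vecNorm_eq_norm, Complex.norm_mul_sin_arg]

lemma cross_vec_eq (f : LinFun) (z : ℂ) :
    f.b * z.im - (1 - f.a) * z.re = f.vecNorm * ‖z‖ * sin (z.arg - f.theta) := by
  rw [sin_sub]
  linear_combination (-(f.vecNorm * cos f.theta)) * Complex.norm_mul_sin_arg z
    - z.im * f.vecNorm_mul_cos_theta + (f.vecNorm * sin f.theta) * Complex.norm_mul_cos_arg z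
    + z.re * f.vecNorm_mul_sin_theta

end LinFun

lemma compList_concat (L : List LinFun) (g : LinFun) : compList (L ++ [g]) = g.comp (compList L) :=
  List.foldl_concat _ _ _ _

lemma compList_cons (g : LinFun) (L : List LinFun) : compList (g :: L) = (compList L).comp g := by
  suffices h : ∀ x, L.foldl (fun acc g => g.comp acc) x = (compList L).comp x by
    simpa [compList] using h g
  induction L using List.reverseRecOn with
  | nil => simp [compList]
  | append_singleton L g ih =>
    intro x
    rw [List.foldl_concat, ih, compList_concat, LinFun.comp_assoc]

section Shift

variable {n : ℕ} (f : Fin n → LinFun) (τ : Equiv.Perm (Fin n))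

lemma shiftComp_add_self (k : ℕ) : shiftComp f τ (k + n) = shiftComp f τ k := by
  have hlen : ((permList f τ).rotate k).length = n := by simp [permList]
  have h := List.rotate_length ((permList f τ).rotate k)
  rw [hlen] at h
  rw [shiftComp, shiftComp, ← List.rotate_rotate, h]

variable [NeZero n]

lemma exists_shiftComp_eq_comp (k : ℕ) :
    ∃ h : LinFun, shiftComp f τ k = h.comp (f (τ (Fin.ofNat n k))) ∧
      shiftComp f τ (k + 1) = (f (τ (Fin.ofNat n k))).comp h := by
  have hlen : (permList f τ).length = n := by simp [permList]
  obtain ⟨x, T, hxT⟩ := List.exists_cons_of_ne_nil (l := (permList f τ).rotate k)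
    (by simp [← List.length_pos_iff, hlen, Nat.pos_of_neZero])
  have hx : x = f (τ (Fin.ofNat n k)) := by
    have h0 := List.getElem?_rotate (l := permList f τ) (n := k) (m := 0)
      (by simp [hlen, Nat.pos_of_neZero])
    rw [hxT, hlen, zero_add] at h0
    simpa [permList, Fin.ofNat, Nat.mod_lt k (Nat.pos_of_neZero n)] using h0
  refine ⟨compList T, ?_, ?_⟩
  · rw [shiftComp, hxT, compList_cons, hx]
  · rw [shiftComp, ← List.rotate_rotate, hxT, List.rotate_cons_succ, List.rotate_zero,
      compList_concat, hx]

lemma shiftComp_succ_a (k : ℕ) : (shiftComp f τ (k + 1)).a = (shiftComp f τ k).a := by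
  obtain ⟨h, hk, hk1⟩ := exists_shiftComp_eq_comp f τ k
  rw [hk, hk1, LinFun.comp_a_comm]

lemma shiftComp_a_eq (k : ℕ) : (shiftComp f τ k).a = (shiftComp f τ 0).a := by
  induction k with
  | zero => rfl
  | succ k ih => rw [shiftComp_succ_a, ih]

lemma shiftComp_succ_b (k : ℕ) :
    (shiftComp f τ (k + 1)).b =
      (f (τ (Fin.ofNat n k))).a * (shiftComp f τ k).b +
        (1 - (shiftComp f τ 0).a) * (f (τ (Fin.ofNat n k))).b := by
  obtain ⟨h, hk, hk1⟩ := exists_shiftComp_eq_comp f τ k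
  rw [← shiftComp_a_eq f τ k, hk, hk1, LinFun.comp_b_eq]

end Shift

lemma monotone_div_sqrt_sq_add_sq {t : ℝ} (ht : 0 < t) :
    Monotone fun x : ℝ => x / √(x ^ 2 + t ^ 2) := by
  intro x y hxy
  have ha : 0 < √(x ^ 2 + t ^ 2) := by positivity
  have hb : 0 < √(y ^ 2 + t ^ 2) := by positivity
  have ha2 := Real.sq_sqrt (by positivity : (0 : ℝ) ≤ x ^ 2 + t ^ 2)
  have hb2 := Real.sq_sqrt (by positivity : (0 : ℝ) ≤ y ^ 2 + t ^ 2)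
  rw [div_le_div_iff₀ ha hb]
  set a := √(x ^ 2 + t ^ 2)
  set b := √(y ^ 2 + t ^ 2)
  have key : (x * b) ^ 2 - (y * a) ^ 2 = t ^ 2 * (x ^ 2 - y ^ 2) := by
    rw [mul_pow, mul_pow, ha2, hb2]; ring
  rcases le_total 0 x with hx | hx
  · have hxy2 : x ^ 2 ≤ y ^ 2 := pow_le_pow_left₀ hx hxy 2
    refine (pow_le_pow_iff_left₀ (by positivity) (by nlinarith) two_ne_zero).mp ?_
    nlinarith [mul_le_mul_of_nonneg_left hxy2 (sq_nonneg t)]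
  rcases le_total 0 y with hy | hy
  · nlinarith
  · have hxy2 : y ^ 2 ≤ x ^ 2 := by nlinarith
    refine neg_le_neg_iff.mp ((pow_le_pow_iff_left₀ (by nlinarith) (by nlinarith)
      two_ne_zero).mp ?_)
    nlinarith [mul_le_mul_of_nonneg_left hxy2 (sq_nonneg t)]

lemma Complex.arg_mk_antitone {t : ℝ} (ht : 0 ≤ t) :
    Antitone fun x : ℝ => Complex.arg ⟨x, t⟩ := by
  intro x y hxy
  rcases ht.eq_or_lt with rfl | ht
  · have hx : (⟨x, 0⟩ : ℂ) = (x : ℂ) := rfl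
    have hy : (⟨y, 0⟩ : ℂ) = (y : ℂ) := rfl
    simp only [hx, hy]
    rcases lt_or_ge y 0 with hy0 | hy0
    · rw [Complex.arg_ofReal_of_neg hy0, Complex.arg_ofReal_of_neg (hxy.trans_lt hy0)]
    · rw [Complex.arg_ofReal_of_nonneg hy0]
      exact Complex.arg_nonneg_iff.2 le_rfl
  · simp only [Complex.arg_of_im_pos (show 0 < (⟨_, t⟩ : ℂ).im from ht), Complex.norm_def,
      Complex.normSq_mk, ← sq]
    exact arccos_le_arccos (monotone_div_sqrt_sq_add_sq ht hxy)

/-- For `t ≠ 0`, `s / t` is an orbit of the maps `g k`; the intercepts of the shifts form such a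
sequence, with `t` one minus their common slope. -/
abbrev IsScaledOrbit (t : ℝ) (g : ℕ → LinFun) (s : ℕ → ℝ) : Prop :=
  ∀ k, s (k + 1) = (g k).a * s k + t * (g k).b

def ThetaMonotone (g : ℕ → LinFun) (n : ℕ) : Prop :=
  ∀ u v, u ≤ v → v < n → ¬ (g u).IsId → ¬ (g v).IsId → (g u).theta ≤ (g v).theta

section Orbit

variable {t : ℝ} {g : ℕ → LinFun} {s : ℕ → ℝ}

lemma IsScaledOrbit.sub_eq (h : IsScaledOrbit t g s) (k : ℕ) :
    s (k + 1) - s k =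
      (g k).vecNorm * ‖(⟨s k, t⟩ : ℂ)‖ *
        sin (Complex.arg ⟨s k, t⟩ - (g k).theta) := by
  rw [← LinFun.cross_vec_eq, h k]
  ring

lemma IsScaledOrbit.a_mul_sub_eq (h : IsScaledOrbit t g s) (k : ℕ) :
    (g k).a * (s (k + 1) - s k) =
      (g k).vecNorm * ‖(⟨s (k + 1), t⟩ : ℂ)‖ *
        sin (Complex.arg ⟨s (k + 1), t⟩ - (g k).theta) := by
  rw [← LinFun.cross_vec_eq, h k]
  ring

lemma IsScaledOrbit.sin_pos_of_lt (h : IsScaledOrbit t g s) {k : ℕ} (hk : s k < s (k + 1)) :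
    0 < sin (Complex.arg ⟨s k, t⟩ - (g k).theta) := by
  have hpos := sub_pos.2 hk
  rw [h.sub_eq] at hpos
  exact pos_of_mul_pos_right hpos (mul_nonneg (g k).vecNorm_nonneg (norm_nonneg _))

lemma IsScaledOrbit.sin_neg_of_gt (h : IsScaledOrbit t g s) {k : ℕ} (hk : s (k + 1) < s k) :
    sin (Complex.arg ⟨s k, t⟩ - (g k).theta) < 0 := by
  have hneg := sub_neg.2 hk
  rw [h.sub_eq] at hneg
  exact neg_of_mul_neg_right hneg (mul_nonneg (g k).vecNorm_nonneg (norm_nonneg _))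

lemma IsScaledOrbit.sin_succ_neg_of_gt (h : IsScaledOrbit t g s) {k : ℕ} (ha : 0 < (g k).a)
    (hk : s (k + 1) < s k) : sin (Complex.arg ⟨s (k + 1), t⟩ - (g k).theta) < 0 := by
  have hneg := mul_neg_of_pos_of_neg ha (sub_neg.2 hk)
  rw [h.a_mul_sub_eq] at hneg
  exact neg_of_mul_neg_right hneg (mul_nonneg (g k).vecNorm_nonneg (norm_nonneg _))

end Orbit

def HasDescentAscentDescent {α : Type*} [LinearOrder α] (s : ℕ → α) (n : ℕ) : Prop :=
  ∃ p q r, p < q ∧ q < r ∧ r < n ∧ s (p + 1) < s p ∧ s q < s (q + 1) ∧ s (r + 1) < s r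

def CyclicallyUnimodal {α : Type*} [LinearOrder α] (s : ℕ → α) (n : ℕ) : Prop :=
  ∃ k m : ℕ, m ≤ n ∧ (∀ i : ℕ, i < m → s (k + i) ≤ s (k + i + 1)) ∧
    (∀ i : ℕ, m ≤ i → i < n → s (k + i + 1) ≤ s (k + i))

section Descents

variable {α : Type*} [LinearOrder α] {s : ℕ → α}

lemma exists_last_descent_le {p q : ℕ} (hp : s (p + 1) < s p) (hpq : p < q) :
    ∃ p', p ≤ p' ∧ p' < q ∧ s (p' + 1) < s p' ∧ s (p' + 1) ≤ s q := by
  induction q, hpq using Nat.le_induction with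
  | base => exact ⟨p, le_rfl, p.lt_succ_self, hp, le_rfl⟩
  | succ q hpq ih =>
    obtain ⟨p', hpp', hp'q, hp', hle⟩ := ih
    by_cases hq : s (q + 1) < s q
    · exact ⟨q, Nat.le_of_succ_le hpq, q.lt_succ_self, hq, le_rfl⟩
    · exact ⟨p', hpp', hp'q.trans q.lt_succ_self, hp', hle.trans (not_lt.mp hq)⟩

lemma exists_first_descent_ge {q r : ℕ} (hr : s (r + 1) < s r) (hqr : q ≤ r) :
    ∃ r', q ≤ r' ∧ r' ≤ r ∧ s (r' + 1) < s r' ∧ s q ≤ s r' := by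
  obtain ⟨d, rfl⟩ := Nat.exists_eq_add_of_le hqr
  induction d generalizing q with
  | zero => exact ⟨q, le_rfl, le_rfl, hr, le_rfl⟩
  | succ d ih =>
    by_cases hq : s (q + 1) < s q
    · exact ⟨q, le_rfl, by omega, hq, le_rfl⟩
    · obtain ⟨r', hqr', hr'r, hr', hle⟩ :=
        ih (q := q + 1) (by rwa [show q + 1 + d = q + (d + 1) by omega]) (by omega)
      exact ⟨r', by omega, by omega, hr', (not_lt.mp hq).trans hle⟩

end Descents

/-- With `φ k` the direction of `(s k, t)`: a descent at `p'` leaves `θ p'` beyond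
`φ (p' + 1)`, the ascent at `q` then leaves `θ q` beyond `φ q + π`, and as `φ` does not
increase until the next descent `r'`, that descent would need `θ r'` within `π` beyond `φ r'`. -/
theorem IsScaledOrbit.not_hasDescentAscentDescent {n : ℕ} {t : ℝ} {g : ℕ → LinFun}
    {s : ℕ → ℝ} (ht : 0 ≤ t) (ha : ∀ k, 0 < (g k).a) (h : IsScaledOrbit t g s)
    (hmono : ThetaMonotone g n) : ¬ HasDescentAscentDescent s n := by
  rintro ⟨p, q, r, hpq, hqr, hrn, hp, hq, hr⟩
  obtain ⟨p', -, hp'q, hp', hsp'⟩ := exists_last_descent_le hp hpq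
  obtain ⟨r', hqr', hr'r, hr', hsr'⟩ := exists_first_descent_ge hr hqr.le
  set φ : ℕ → ℝ := fun k => Complex.arg ⟨s k, t⟩
  set θ : ℕ → ℝ := fun k => (g k).theta
  have hφ0 : ∀ k, 0 ≤ φ k := fun k => Complex.arg_nonneg_iff.2 ht
  have hφπ : ∀ k, φ k ≤ π := fun k => Complex.arg_le_pi _
  have hθ2π : ∀ k, θ k < 2 * π := fun k => (g k).theta_lt_two_pi
  have hnonid : ∀ k, s (k + 1) ≠ s k → ¬ (g k).IsId := by
    intro k hk hid
    apply hk
    rw [h k, hid]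
    simp [LinFun.idf]
  have hθ_pq : θ p' ≤ θ q :=
    hmono _ _ hp'q.le (hqr.trans hrn) (hnonid _ hp'.ne) (hnonid _ hq.ne')
  have hθ_qr : θ q ≤ θ r' :=
    hmono _ _ hqr' (lt_of_le_of_lt hr'r hrn) (hnonid _ hq.ne') (hnonid _ hr'.ne)
  have hsin_p : sin (φ (p' + 1) - θ p') < 0 := h.sin_succ_neg_of_gt (ha p') hp'
  have hsin_q : 0 < sin (φ q - θ q) := h.sin_pos_of_lt hq
  have hsin_r : sin (φ r' - θ r') < 0 := h.sin_neg_of_gt hr'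
  have h1 : φ q < θ q := by
    by_contra! hle
    have : φ q ≤ φ (p' + 1) := Complex.arg_mk_antitone ht hsp'
    exact hsin_p.not_ge (sin_nonneg_of_nonneg_of_le_pi (by linarith)
      (by linarith [hφπ (p' + 1), (g p').theta_nonneg]))
  have h2 : φ q + π < θ q := by
    by_contra! hle
    exact hsin_q.not_ge (sin_nonpos_of_nonpos_of_neg_pi_le (by linarith) (by linarith))
  have h3 : 0 < sin (φ r' - θ r') := by
    have : φ r' ≤ φ q := Complex.arg_mk_antitone ht hsr'
    rw [← sin_add_two_pi]
    exact sin_pos_of_pos_of_lt_pi (by linarith [hφ0 r', hθ2π r']) (by linarith)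
  exact hsin_r.not_gt h3

namespace CyclicallyUnimodal

variable {α : Type*} [LinearOrder α] {s : ℕ → α} {n : ℕ}

lemma of_forall_not_descent_ascent (k : ℕ)
    (h : ∀ p q, p < q → q < n → s (k + p + 1) < s (k + p) → ¬ s (k + q) < s (k + q + 1)) :
    CyclicallyUnimodal s n := by
  classical
  by_cases hd : ∃ j, j < n ∧ s (k + j + 1) < s (k + j)
  · have hm := Nat.find_spec hd
    refine ⟨k, Nat.find hd, hm.1.le, fun i hi => ?_, fun i hmi hin => ?_⟩
    · exact not_lt.mp fun hdi => Nat.find_min hd hi ⟨by omega, hdi⟩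
    · rcases hmi.eq_or_lt with rfl | hmi
      · exact hm.2.le
      · exact not_lt.mp (h _ _ hmi hin hm.2)
  · push Not at hd
    exact ⟨k, n, le_rfl, hd, fun i hni hin => absurd hin (not_lt.mpr hni)⟩

/-- The window starting right after the last descent of a window without the pattern
`descent, ascent, descent` has no descent followed by an ascent. -/
lemma of_not_hasDescentAscentDescent (hper : Function.Periodic s n) (c : ℕ)
    (h : ¬ HasDescentAscentDescent (fun i => s (c + i)) n) : CyclicallyUnimodal s n := by
  classical
  by_cases hd : ∃ j, j < n ∧ s (c + j + 1) < s (c + j)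
  · obtain ⟨j, hjn, hj⟩ := hd
    let P : ℕ → Prop := fun j => s (c + j + 1) < s (c + j)
    set m := Nat.findGreatest P (n - 1)
    have hm : s (c + m + 1) < s (c + m) := Nat.findGreatest_spec (P := P) (by omega) hj
    have hmn : m < n := by have := Nat.findGreatest_le (P := P) (n - 1); omega
    have hper' : ∀ i j, i = j + n → s i = s j := by
      rintro i j rfl
      exact hper j
    refine of_forall_not_descent_ascent (c + m + 1) fun p q hpq hqn hp hq => h ?_
    have hpn : n ≤ m + 1 + p := by
      by_contra! hlt
      refine Nat.findGreatest_is_greatest (P := P) (n := n - 1) (k := m + 1 + p) (by omega)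
        (by omega) ?_
      show s (c + (m + 1 + p) + 1) < s (c + (m + 1 + p))
      simpa only [← add_assoc] using hp
    rw [hper' (c + m + 1 + p) (c + (m + 1 + p - n)) (by omega),
      hper' (c + m + 1 + p + 1) (c + (m + 1 + p - n + 1)) (by omega)] at hp
    rw [hper' (c + m + 1 + q) (c + (m + 1 + q - n)) (by omega),
      hper' (c + m + 1 + q + 1) (c + (m + 1 + q - n + 1)) (by omega)] at hq
    refine ⟨m + 1 + p - n, m + 1 + q - n, m, by omega,
      lt_of_le_of_ne (by omega) fun heq => ?_, hmn, hp, hq, hm⟩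
    rw [heq] at hq
    exact hq.asymm hm
  · push Not at hd
    exact of_forall_not_descent_ascent c fun p q _ hqn hp =>
      absurd hp (not_lt.mpr (hd p (by omega)))

lemma of_neg {β : Type*} [AddCommGroup β] [LinearOrder β] [IsOrderedAddMonoid β] {s : ℕ → β}
    (hper : Function.Periodic s n) (h : CyclicallyUnimodal (-s) n) :
    CyclicallyUnimodal s n := by
  obtain ⟨k, m, hmn, hup, hdown⟩ := h
  refine ⟨k + m, n - m, Nat.sub_le n m, fun i hi => ?_, fun i hi hin => ?_⟩
  · have := hdown (m + i) (by omega) (by omega)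
    simp only [Pi.neg_apply, neg_le_neg_iff, ← add_assoc] at this
    exact this
  · have := hup (m + i - n) (by omega)
    simp only [Pi.neg_apply, neg_le_neg_iff] at this
    rwa [show k + m + i = k + (m + i - n) + n by omega, hper,
      show k + (m + i - n) + n + 1 = k + (m + i - n) + 1 + n by omega, hper]

end CyclicallyUnimodal

lemma Counterclockwise.exists_theta_mono {n : ℕ} [NeZero n] {f : Fin n → LinFun}
    {τ : Equiv.Perm (Fin n)} (h : Counterclockwise f τ) :
    ∃ c : ℕ, ThetaMonotone (fun k => f (τ (Fin.ofNat n (c + k)))) n := by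
  obtain ⟨c, hc⟩ := h
  refine ⟨min c n, fun u v huv hvn hu hv => hc _ _ hu hv ?_⟩
  have hmod : ∀ w, w < 2 * n → (w % n = w ∧ w < n) ∨ (w % n = w - n ∧ n ≤ w) := by
    intro w hw
    rcases lt_or_ge w n with hwn | hwn
    · exact .inl ⟨Nat.mod_eq_of_lt hwn, hwn⟩
    · exact .inr ⟨by rw [Nat.mod_eq_sub_mod hwn, Nat.mod_eq_of_lt (by omega)], hwn⟩
  simp only [Fin.le_def, Fin.val_ofNat]
  rcases hmod (min c n + u) (by omega) with ⟨hu, hu'⟩ | ⟨hu, hu'⟩ <;>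
    rcases hmod (min c n + v) (by omega) with ⟨hv, hv'⟩ | ⟨hv, hv'⟩ <;> omega

/-- cyclic unimodality of the intercepts of the composites of the shifts of a
counterclockwise permutation. `shiftComp f τ k` is `f^{τ_k}`, and `List.rotate` is cyclic,
so the indices of the shifts are read modulo `n`. -/
theorem stmt11 {n : ℕ} (f : Fin n → LinFun) (hf : ∀ i, 0 < (f i).a)
    (τ : Equiv.Perm (Fin n)) (hccw : Counterclockwise f τ) :
    ∃ k m : ℕ, m ≤ n ∧
      (∀ i : ℕ, i < m →
        (shiftComp f τ (k + i)).b ≤ (shiftComp f τ (k + i + 1)).b) ∧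
      (∀ i : ℕ, m ≤ i → i < n →
        (shiftComp f τ (k + i + 1)).b ≤ (shiftComp f τ (k + i)).b) := by
  rcases Nat.eq_zero_or_pos n with rfl | hn
  · exact ⟨0, 0, le_rfl, fun i hi => absurd hi i.not_lt_zero,
      fun i _ hi => absurd hi i.not_lt_zero⟩
  have : NeZero n := ⟨hn.ne'⟩
  obtain ⟨c, hmono⟩ := hccw.exists_theta_mono
  set s : ℕ → ℝ := fun k => (shiftComp f τ k).b
  set t := 1 - (shiftComp f τ 0).a
  have hper : Function.Periodic s n := fun k => congrArg LinFun.b (shiftComp_add_self f τ k)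
  have horbit : IsScaledOrbit t (fun k => f (τ (Fin.ofNat n (c + k)))) fun k => s (c + k) :=
    fun k => shiftComp_succ_b f τ (c + k)
  show CyclicallyUnimodal s n
  rcases le_total 0 t with ht | ht
  · exact .of_not_hasDescentAscentDescent hper c
      (horbit.not_hasDescentAscentDescent ht (fun _ => hf _) hmono)
  · refine .of_neg hper (.of_not_hasDescentAscentDescent (hper.comp Neg.neg) c ?_)
    refine IsScaledOrbit.not_hasDescentAscentDescent (neg_nonneg.2 ht) (fun _ => hf _)
      (fun k => ?_) hmono
    simp only [Pi.neg_apply, horbit k]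
    ring
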